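/- Let Q be a symmetric traceless real 3×3 matrix whose largest eigenvalue λ₁ is simple (strictly greater than the other two eigenvalues), and let e₁ be a unit eigenvector of Q for λ₁. Then the function N ↦ |Q − N| on 𝒩 attains its minimum at N = s₊(e₁⊗e₁ − (1/3)Id), and this minimizer is unique: for every N ∈ 𝒩 with N ≠ s₊(e₁⊗e₁ − (1/3)Id) one has |Q − N| > |Q − s₊(e₁⊗e₁ − (1/3)Id)|. -/

import Mathlib

open MeasureTheory Matrix Metric Filter
open scoped RealInnerProductSpace

noncomputable section

attribute [local instance] Matrix.frobeniusNormedAddCommGroup Matrix.frobeniusNormedSpace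

/-- The space of real 3×3 matrices. -/
abbrev Mat3 := Matrix (Fin 3) (Fin 3) ℝ

/-- Euclidean 3-space. -/
abbrev E3 := EuclideanSpace ℝ (Fin 3)

/-- The constant `s₊ = (b² + √(b⁴ + 24a²c²))/(4c²)`. -/
def sPlus (a b c : ℝ) : ℝ := (b ^ 2 + Real.sqrt (b ^ 4 + 24 * a ^ 2 * c ^ 2)) / (4 * c ^ 2)

/-- The matrix `n ⊗ n`, with entries `nᵢnⱼ`. -/
def outer (n : Fin 3 → ℝ) : Mat3 := fun i j => n i * n j

/-- The vacuum manifold `𝒩 = { s₊(n⊗n − (1/3)Id) : n ∈ S² }`. -/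
def Nset (a b c : ℝ) : Set Mat3 :=
  {Q | ∃ n : Fin 3 → ℝ, (∑ i, n i ^ 2) = 1 ∧
    Q = sPlus a b c • (outer n - (1 / 3 : ℝ) • (1 : Mat3))}

/-- Squared Frobenius norm `tr(AAᵀ) = ∑ᵢⱼ Aᵢⱼ²`. -/
def frobSq (A : Mat3) : ℝ := ∑ i, ∑ j, (A i j) ^ 2

/-- Frobenius norm. -/
def frob (A : Mat3) : ℝ := Real.sqrt (frobSq A)

/-- The additive normalization constant `C₀ = a²s₊²/3 + 2b²s₊³/27 − c²s₊⁴/9`. -/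
def C0 (a b c : ℝ) : ℝ :=
  a ^ 2 * (sPlus a b c) ^ 2 / 3 + 2 * b ^ 2 * (sPlus a b c) ^ 3 / 27
    - c ^ 2 * (sPlus a b c) ^ 4 / 9

/-- The bulk potential `f_b(Q)`. -/
def fb (a b c : ℝ) (Q : Mat3) : ℝ :=
  -(a ^ 2 / 2) * (Q * Q).trace - (b ^ 2 / 3) * (Q * Q * Q).trace
    + (c ^ 2 / 4) * ((Q * Q).trace) ^ 2 + C0 a b c

/-- Frobenius distance from `Q` to the manifold `𝒩`. -/
def distN (a b c : ℝ) (Q : Mat3) : ℝ := sInf {d : ℝ | ∃ N ∈ Nset a b c, d = frob (Q - N)}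

/-- Partial derivative `∂_α Q(x)` of a matrix-valued map. -/
def pd (Q : E3 → Mat3) (α : Fin 3) (x : E3) : Mat3 :=
  fderiv ℝ Q x (EuclideanSpace.single α 1)

/-- `|∇Q(x)|² = ∑_α |∂_αQ(x)|²` (Frobenius norms). -/
def gradSq (Q : E3 → Mat3) (x : E3) : ℝ := ∑ α, frobSq (pd Q α x)

/-- Radial derivative `(∂Q/∂r)(x) = ∑_α (x_α/|x|) ∂_αQ(x)`. -/
def radD (Q : E3 → Mat3) (x : E3) : Mat3 := ‖x‖⁻¹ • ∑ α, (x α) • pd Q α x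

/-- Componentwise Laplacian `ΔQ(x)`. -/
def lap (Q : E3 → Mat3) (x : E3) : Mat3 :=
  ∑ α, fderiv ℝ (fun y => pd Q α y) x (EuclideanSpace.single α 1)

/-- The Landau–de Gennes energy density `e_ε(Q) = ½|∇Q|² + ε⁻²f_b(Q)`. -/
def eDen (a b c ε : ℝ) (Q : E3 → Mat3) (x : E3) : ℝ :=
  gradSq Q x / 2 + (ε ^ 2)⁻¹ * fb a b c (Q x)

/-- `Q` is a local minimizer of `I_ε(·, U)`: its energy density is locally integrable on `U`
and it minimizes the energy on every bounded open `D` with closure in `U` among competitors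
with locally integrable energy density agreeing with `Q` outside a compact subset of `D`. -/
def IsLocalMinimizer (a b c ε : ℝ) (U : Set E3) (Q : E3 → Mat3) : Prop :=
  LocallyIntegrableOn (eDen a b c ε Q) U volume ∧
  ∀ D : Set E3, IsOpen D → Bornology.IsBounded D → closure D ⊆ U →
    ∀ V : E3 → Mat3, LocallyIntegrableOn (eDen a b c ε V) U volume →
      (∃ K : Set E3, K ⊆ D ∧ IsCompact K ∧ ∀ x ∈ U \ K, V x = Q x) →
      ∫ x in D, eDen a b c ε Q x ≤ ∫ x in D, eDen a b c ε V x

/-!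
With `P n = s₊(n⊗n − Id/3)` and `|n| = 1` one has `|P n|² = 2s₊²/3` and
`⟨Q, P n⟩ = s₊(nᵀQn − tr Q/3)`, so `|Q − P n|² = |Q|² − 2s₊(nᵀQn − tr Q/3) + 2s₊²/3`. As `s₊ > 0`,
minimising the distance to `𝒩` means maximising the Rayleigh quotient `nᵀQn` on the unit sphere.
Its maximum is the top eigenvalue `λ₁`, attained only at eigenvectors for `λ₁`, i.e. at `n = ±e₁`,
which give the same point of `𝒩`.
-/

namespace IsSelfAdjoint

variable {F : Type*} [NormedAddCommGroup F] [InnerProductSpace ℝ F] [CompleteSpace F]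
  {T : F →L[ℝ] F}

theorem eq_reApplyInnerSelf_smul_of_isMaxOn_sphere (hT : IsSelfAdjoint T) {x : F}
    (hx : ‖x‖ = 1) (hmax : IsMaxOn T.reApplyInnerSelf (sphere 0 1) x) :
    T x = T.reApplyInnerSelf x • x := by
  have hextr : IsLocalExtrOn T.reApplyInnerSelf (sphere 0 ‖x‖) x := by
    rw [hx]; exact Or.inr hmax.localize
  simpa [ContinuousLinearMap.rayleighQuotient, hx] using hT.eq_smul_self_of_isLocalExtrOn_real hextr

variable [FiniteDimensional ℝ F] {lam : ℝ}

/-- The maximum of the quadratic form on the compact unit sphere is attained at an eigenvector,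
so it is itself an eigenvalue. -/
theorem reApplyInnerSelf_le_of_eigenvalues_le (hT : IsSelfAdjoint T)
    (hlam : ∀ (μ : ℝ) (x : F), x ≠ 0 → T x = μ • x → μ ≤ lam) {x : F} (hx : ‖x‖ = 1) :
    T.reApplyInnerSelf x ≤ lam := by
  obtain ⟨x₀, hx₀, hmax⟩ := (isCompact_sphere (0 : F) 1).exists_isMaxOn
    ⟨x, mem_sphere_zero_iff_norm.2 hx⟩ T.reApplyInnerSelf_continuous.continuousOn
  have hx₀ : ‖x₀‖ = 1 := mem_sphere_zero_iff_norm.1 hx₀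
  calc T.reApplyInnerSelf x ≤ T.reApplyInnerSelf x₀ := hmax (mem_sphere_zero_iff_norm.2 hx)
    _ ≤ lam := hlam _ x₀ (norm_ne_zero_iff.1 (by rw [hx₀]; exact one_ne_zero))
        (hT.eq_reApplyInnerSelf_smul_of_isMaxOn_sphere hx₀ hmax)

theorem eq_smul_of_reApplyInnerSelf_eq (hT : IsSelfAdjoint T)
    (hlam : ∀ (μ : ℝ) (x : F), x ≠ 0 → T x = μ • x → μ ≤ lam) {x : F} (hx : ‖x‖ = 1)
    (heq : T.reApplyInnerSelf x = lam) : T x = lam • x := by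
  have hmax : IsMaxOn T.reApplyInnerSelf (sphere 0 1) x := fun y hy => by
    rw [Set.mem_ofPred_eq, heq]
    exact hT.reApplyInnerSelf_le_of_eigenvalues_le hlam (mem_sphere_zero_iff_norm.1 hy)
  rw [← heq]
  exact hT.eq_reApplyInnerSelf_smul_of_isMaxOn_sphere hx hmax

end IsSelfAdjoint

namespace Matrix

variable {ι : Type*} [Fintype ι] {A : Matrix ι ι ℝ} {lam : ℝ}

theorem norm_toLp_eq_one_of_dotProduct_self {v : ι → ℝ} (hv : v ⬝ᵥ v = 1) :
    ‖WithLp.toLp 2 v‖ = 1 := by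
  simp only [EuclideanSpace.norm_eq, dotProduct, ← sq] at hv ⊢
  simp [hv]

theorem reApplyInnerSelf_toEuclideanCLM [DecidableEq ι] (v : ι → ℝ) :
    (toEuclideanCLM (𝕜 := ℝ) A).reApplyInnerSelf (WithLp.toLp 2 v) = v ⬝ᵥ A *ᵥ v := by
  rw [ContinuousLinearMap.reApplyInnerSelf, RCLike.re_to_real, real_inner_comm,
    inner_toEuclideanCLM]

theorem toEuclideanCLM_eigenvalue_le [DecidableEq ι]
    (hlam : ∀ (μ : ℝ) (v : ι → ℝ), v ≠ 0 → A *ᵥ v = μ • v → μ ≤ lam) (μ : ℝ)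
    (x : EuclideanSpace ℝ ι) (hx : x ≠ 0) (hμ : toEuclideanCLM (𝕜 := ℝ) A x = μ • x) :
    μ ≤ lam :=
  hlam μ x.ofLp (by simpa using hx) (by simpa using congrArg WithLp.ofLp hμ)

namespace IsSymm

variable [DecidableEq ι]

theorem isSelfAdjoint_toEuclideanCLM (hA : A.IsSymm) :
    IsSelfAdjoint (toEuclideanCLM (𝕜 := ℝ) A) := by
  have hA' : IsSelfAdjoint A := by
    simpa [IsSelfAdjoint, star_eq_conjTranspose] using hA.eq
  exact hA'.map _

theorem dotProduct_mulVec_le (hA : A.IsSymm)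
    (hlam : ∀ (μ : ℝ) (v : ι → ℝ), v ≠ 0 → A *ᵥ v = μ • v → μ ≤ lam) {v : ι → ℝ}
    (hv : v ⬝ᵥ v = 1) : v ⬝ᵥ A *ᵥ v ≤ lam := by
  rw [← reApplyInnerSelf_toEuclideanCLM]
  exact hA.isSelfAdjoint_toEuclideanCLM.reApplyInnerSelf_le_of_eigenvalues_le
    (toEuclideanCLM_eigenvalue_le hlam) (norm_toLp_eq_one_of_dotProduct_self hv)

theorem mulVec_eq_smul_of_dotProduct_mulVec_eq (hA : A.IsSymm)
    (hlam : ∀ (μ : ℝ) (v : ι → ℝ), v ≠ 0 → A *ᵥ v = μ • v → μ ≤ lam) {v : ι → ℝ}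
    (hv : v ⬝ᵥ v = 1) (heq : v ⬝ᵥ A *ᵥ v = lam) : A *ᵥ v = lam • v := by
  rw [← reApplyInnerSelf_toEuclideanCLM] at heq
  simpa using congrArg WithLp.ofLp
    (hA.isSelfAdjoint_toEuclideanCLM.eq_smul_of_reApplyInnerSelf_eq
      (toEuclideanCLM_eigenvalue_le hlam) (norm_toLp_eq_one_of_dotProduct_self hv) heq)

end IsSymm

end Matrix

theorem frobSq_sub_smul_outer (Q : Mat3) (s : ℝ) {n : Fin 3 → ℝ} (hn : ∑ i, n i ^ 2 = 1) :
    frobSq (Q - s • (outer n - (1 / 3 : ℝ) • (1 : Mat3))) =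
      frobSq Q - 2 * s * (n ⬝ᵥ Q *ᵥ n - Q.trace / 3) + 2 * s ^ 2 / 3 := by
  simp only [Fin.sum_univ_three] at hn
  simp only [frobSq, outer, Matrix.trace, Matrix.diag, dotProduct, Matrix.mulVec,
    Matrix.sub_apply, Matrix.smul_apply, Matrix.one_apply, smul_eq_mul, Fin.sum_univ_three]
  norm_num [Fin.ext_iff]
  linear_combination s ^ 2 * (n 0 ^ 2 + n 1 ^ 2 + n 2 ^ 2 + 1 / 3) * hn

theorem frobSq_nonneg (A : Mat3) : 0 ≤ frobSq A := by unfold frobSq; positivity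

theorem outer_smul (t : ℝ) (v : Fin 3 → ℝ) : outer (t • v) = t ^ 2 • outer v := by
  ext i j; simp only [outer, Pi.smul_apply, Matrix.smul_apply, smul_eq_mul]; ring

theorem sPlus_pos {a b c : ℝ} (hb : b ≠ 0) (hc : c ≠ 0) : 0 < sPlus a b c := by
  unfold sPlus; positivity

theorem stmt2_general (a b c : ℝ) (hb : 0 < b) (hc : 0 < c)
    (Q : Mat3) (hsym : Q.IsSymm)
    (lam : ℝ) (e₁ : Fin 3 → ℝ) (hunit : (∑ i, e₁ i ^ 2) = 1)
    (heig : Q.mulVec e₁ = lam • e₁)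
    (hmax : ∀ (μ : ℝ) (v : Fin 3 → ℝ), v ≠ 0 → Q.mulVec v = μ • v → μ ≤ lam)
    (hsimple : ∀ v : Fin 3 → ℝ, Q.mulVec v = lam • v → ∃ t : ℝ, v = t • e₁) :
    sPlus a b c • (outer e₁ - (1 / 3 : ℝ) • (1 : Mat3)) ∈ Nset a b c ∧
    (∀ N ∈ Nset a b c,
      frob (Q - sPlus a b c • (outer e₁ - (1 / 3 : ℝ) • (1 : Mat3))) ≤ frob (Q - N)) ∧
    (∀ N ∈ Nset a b c, N ≠ sPlus a b c • (outer e₁ - (1 / 3 : ℝ) • (1 : Mat3)) →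
      frob (Q - sPlus a b c • (outer e₁ - (1 / 3 : ℝ) • (1 : Mat3))) < frob (Q - N)) := by
  set s := sPlus a b c
  have hs : 0 < s := sPlus_pos hb.ne' hc.ne'
  have hdot : ∀ n : Fin 3 → ℝ, ∑ i, n i ^ 2 = 1 → n ⬝ᵥ n = 1 := fun n hn => by
    simpa [dotProduct, sq] using hn
  have hquad_e₁ : e₁ ⬝ᵥ Q *ᵥ e₁ = lam := by
    rw [heig, dotProduct_smul, hdot e₁ hunit, smul_eq_mul, mul_one]
  have hdist : ∀ n : Fin 3 → ℝ, ∑ i, n i ^ 2 = 1 →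
      frobSq (Q - s • (outer n - (1 / 3 : ℝ) • 1)) =
        frobSq (Q - s • (outer e₁ - (1 / 3 : ℝ) • 1)) + 2 * s * (lam - n ⬝ᵥ Q *ᵥ n) :=
    fun n hn => by
      rw [frobSq_sub_smul_outer Q s hn, frobSq_sub_smul_outer Q s hunit, hquad_e₁]
      ring
  refine ⟨⟨e₁, hunit, rfl⟩, ?_, ?_⟩
  · rintro _ ⟨n, hn, rfl⟩
    have hle := hsym.dotProduct_mulVec_le hmax (hdot n hn)
    apply Real.sqrt_le_sqrt
    rw [hdist n hn]
    exact le_add_of_nonneg_right (mul_nonneg (by positivity) (sub_nonneg.2 hle))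
  · rintro _ ⟨n, hn, rfl⟩ hne
    have hlt : n ⬝ᵥ Q *ᵥ n < lam := by
      refine (hsym.dotProduct_mulVec_le hmax (hdot n hn)).lt_of_ne fun heq => hne ?_
      obtain ⟨t, rfl⟩ :=
        hsimple n (hsym.mulVec_eq_smul_of_dotProduct_mulVec_eq hmax (hdot n hn) heq)
      have ht : t ^ 2 = 1 := by
        simpa only [Pi.smul_apply, smul_eq_mul, mul_pow, ← Finset.mul_sum, hunit, mul_one]
          using hn
      rw [outer_smul, ht, one_smul]
    apply Real.sqrt_lt_sqrt (frobSq_nonneg _)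
    rw [hdist n hn]
    exact lt_add_of_pos_right _ (mul_pos (by positivity) (sub_pos.2 hlt))

/-- if the largest eigenvalue `λ₁` of a symmetric traceless `Q` is simple with
unit eigenvector `e₁`, then `N ↦ |Q − N|` on `𝒩` attains its minimum exactly at
`N = s₊(e₁⊗e₁ − (1/3)Id)`. -/
theorem stmt2 (a b c : ℝ) (ha : 0 < a) (hb : 0 < b) (hc : 0 < c)
    (Q : Mat3) (hsym : Q.IsSymm) (htr : Q.trace = 0)
    (lam : ℝ) (e₁ : Fin 3 → ℝ) (hunit : (∑ i, e₁ i ^ 2) = 1)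
    (heig : Q.mulVec e₁ = lam • e₁)
    (hmax : ∀ (μ : ℝ) (v : Fin 3 → ℝ), v ≠ 0 → Q.mulVec v = μ • v → μ ≤ lam)
    (hsimple : ∀ v : Fin 3 → ℝ, Q.mulVec v = lam • v → ∃ t : ℝ, v = t • e₁) :
    sPlus a b c • (outer e₁ - (1 / 3 : ℝ) • (1 : Mat3)) ∈ Nset a b c ∧
    (∀ N ∈ Nset a b c,
      frob (Q - sPlus a b c • (outer e₁ - (1 / 3 : ℝ) • (1 : Mat3))) ≤ frob (Q - N)) ∧
    (∀ N ∈ Nset a b c, N ≠ sPlus a b c • (outer e₁ - (1 / 3 : ℝ) • (1 : Mat3)) →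
      frob (Q - sPlus a b c • (outer e₁ - (1 / 3 : ℝ) • (1 : Mat3))) < frob (Q - N)) :=
  stmt2_general a b c hb hc Q hsym lam e₁ hunit heig hmax hsimple

end
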